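/- arXiv:math/9811033 — 3 statements merged into one kernel-verified Lean document; each statement's English description precedes it below -/
import Mathlib

section
/- Let x be an element of the eigenspace L_1 of ad h for the eigenvalue 1. If ⁅x,y⁆ = 0 for every y ∈ L_1, then x = 0. (Equivalently, the alternating bilinear form on L_1 with values in the line L_2 = ℂe induced by the Lie bracket is nondegenerate, so that L_2 ⊕ L_1 is a Heisenberg Lie algebra with center L_2; this is part of Lemma 3.4.) -/
/-- Lemma 3.4 (Heisenberg nondegeneracy): for an sl₂-triple `(e,h,f)` in a
finite-dimensional complex Lie algebra `L` with nondegenerate Killing form,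
such that `ad h` is diagonalizable with eigenvalues in `{-2,-1,0,1,2}` and the
eigenspace `L₂` is the line spanned by `e`, the alternating form on `L₁` induced
by the bracket is nondegenerate: if `x ∈ L₁` brackets to zero with all of `L₁`,
then `x = 0`. -/
theorem heisenberg_nondegenerate (L : Type*) [LieRing L] [LieAlgebra ℂ L]
    [FiniteDimensional ℂ L]
    (hK : LinearMap.BilinForm.Nondegenerate (killingForm ℂ L))
    (e h f : L)
    (he : ⁅h, e⁆ = (2 : ℂ) • e) (hf : ⁅h, f⁆ = (-2 : ℂ) • f) (hef : ⁅e, f⁆ = h)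
    (hspan :
      Module.End.eigenspace (LieAlgebra.ad ℂ L h) (-2)
        ⊔ Module.End.eigenspace (LieAlgebra.ad ℂ L h) (-1)
        ⊔ Module.End.eigenspace (LieAlgebra.ad ℂ L h) 0
        ⊔ Module.End.eigenspace (LieAlgebra.ad ℂ L h) 1
        ⊔ Module.End.eigenspace (LieAlgebra.ad ℂ L h) 2 = ⊤)
    (hene : e ≠ 0)
    (hL2 : Module.End.eigenspace (LieAlgebra.ad ℂ L h) 2 = Submodule.span ℂ {e}) :
    ∀ x ∈ Module.End.eigenspace (LieAlgebra.ad ℂ L h) 1,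
      (∀ y ∈ Module.End.eigenspace (LieAlgebra.ad ℂ L h) 1, ⁅x, y⁆ = 0) → x = 0 := by
  set T := LieAlgebra.ad ℂ L h with hT
  intro x hx hxy
  -- membership rephrased as bracket equations
  have hmem : ∀ (μ : ℂ) (a : L), a ∈ Module.End.eigenspace T μ ↔ ⁅h, a⁆ = μ • a := by
    intro μ a
    rw [Module.End.mem_eigenspace_iff, hT, LieAlgebra.ad_apply]
  -- brackets of eigenvectors
  have hbr : ∀ (μ ν : ℂ) (a b : L), a ∈ Module.End.eigenspace T μ →
      b ∈ Module.End.eigenspace T ν → ⁅a, b⁆ ∈ Module.End.eigenspace T (μ + ν) := by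
    intro μ ν a b ha hb
    rw [hmem] at ha hb ⊢
    rw [leibniz_lie, ha, hb, smul_lie, lie_smul, add_smul]
  -- eigenspace (-3) is trivial
  have hm3 : Module.End.eigenspace T (-3 : ℂ) = ⊥ := by
    have hind := (Module.End.eigenspaces_iSupIndep T) (-3 : ℂ)
    refine hind.eq_bot_of_le ?_
    refine le_trans le_top ?_
    rw [← hspan]
    have hone : ∀ s : ℂ, s ≠ -3 →
        Module.End.eigenspace T s ≤ ⨆ (j : ℂ) (_ : j ≠ (-3 : ℂ)), Module.End.eigenspace T j := by
      intro s hs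
      exact le_iSup_of_le s (le_iSup_of_le hs le_rfl)
    refine sup_le (sup_le (sup_le (sup_le ?_ ?_) ?_) ?_) ?_ <;>
      apply hone <;> norm_num
  -- x is Killing-orthogonal to every eigenvector
  have horth : ∀ (s : ℂ) (z : L), z ∈ Module.End.eigenspace T s → killingForm ℂ L x z = 0 := by
    intro s z hz
    by_cases hs : s = -1
    · -- the interesting case: use hxy
      subst hs
      have hfz : ⁅f, z⁆ = 0 := by
        have hmem3 : ⁅f, z⁆ ∈ Module.End.eigenspace T ((-2) + (-1) : ℂ) :=
          hbr _ _ _ _ ((hmem _ _).2 hf) hz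
        have h3 : ((-2) + (-1) : ℂ) = -3 := by norm_num
        rw [h3, hm3] at hmem3
        simpa using hmem3
      have hzeq : z = ⁅f, ⁅e, z⁆⁆ := by
        have h1 : ⁅h, z⁆ = (-1 : ℂ) • z := (hmem _ _).1 hz
        have h2 : ⁅⁅e, f⁆, z⁆ = ⁅e, ⁅f, z⁆⁆ - ⁅f, ⁅e, z⁆⁆ := lie_lie e f z
        rw [hef, h1, hfz] at h2
        simp only [lie_zero, zero_sub, neg_smul, one_smul] at h2
        exact neg_inj.mp h2
      have hu : ⁅e, z⁆ ∈ Module.End.eigenspace T (1 : ℂ) := by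
        have hmem1 : ⁅e, z⁆ ∈ Module.End.eigenspace T ((2 : ℂ) + (-1)) :=
          hbr _ _ _ _ ((hmem _ _).2 he) hz
        have h21 : ((2 : ℂ) + (-1)) = 1 := by norm_num
        rwa [h21] at hmem1
      have hb0 : ⁅x, ⁅e, z⁆⁆ = 0 := hxy _ hu
      calc killingForm ℂ L x z
          = killingForm ℂ L x ⁅f, ⁅e, z⁆⁆ := by rw [← hzeq]
        _ = killingForm ℂ L ⁅x, f⁆ ⁅e, z⁆ :=
            (LieModule.traceForm_apply_lie_apply ℂ L L x f _).symm
        _ = - killingForm ℂ L ⁅f, x⁆ ⁅e, z⁆ := by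
            rw [← lie_skew x f, map_neg, LinearMap.neg_apply]
        _ = - killingForm ℂ L f ⁅x, ⁅e, z⁆⁆ := by
            rw [LieModule.traceForm_apply_lie_apply ℂ L L f x _]
        _ = 0 := by rw [hb0]; simp
    · have h1 : killingForm ℂ L ⁅h, x⁆ z = - killingForm ℂ L x ⁅h, z⁆ :=
        LieModule.traceForm_apply_lie_apply' ℂ L L h x z
      rw [(hmem _ _).1 hx, (hmem _ _).1 hz, one_smul, map_smul] at h1
      have hsum : (1 + s) * killingForm ℂ L x z = 0 := by
        rw [smul_eq_mul] at h1
        linear_combination h1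
      have hne : (1 + s : ℂ) ≠ 0 := fun hc => hs (by linear_combination hc)
      exact (mul_eq_zero.mp hsum).resolve_left hne
  -- conclude by nondegeneracy
  refine hK.1 x fun z => ?_
  have htop : (⊤ : Submodule ℂ L) ≤ LinearMap.ker (killingForm ℂ L x) := by
    rw [← hspan]
    refine sup_le (sup_le (sup_le (sup_le ?_ ?_) ?_) ?_) ?_ <;> intro w hw <;>
      simpa [LinearMap.mem_ker] using horth _ _ hw
  simpa [LinearMap.mem_ker] using htop (Submodule.mem_top (x := z))
end

section
/- The eigenspace L_1 of ad h for the eigenvalue 1 is even-dimensional over ℂ. (This underlies the identity dim_ℂ O_min = 2m + 2 of Lemma 3.4, where 2m = dim_ℂ L_1.) -/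
/-- A finite-dimensional complex vector space carrying a nondegenerate alternating
bilinear form is even-dimensional. -/
lemma even_finrank_of_alt_nondeg {V : Type*} [AddCommGroup V] [Module ℂ V]
    [FiniteDimensional ℂ V] (B : LinearMap.BilinForm ℂ V)
    (halt : B.IsAlt) (hnd : B.Nondegenerate) : Even (Module.finrank ℂ V) := by
  let b := Module.finBasis ℂ V
  have hdet : (BilinForm.toMatrix b B).det ≠ 0 :=
    (LinearMap.BilinForm.nondegenerate_iff_det_ne_zero b).mp hnd
  have hskew : (BilinForm.toMatrix b B).transpose = -(BilinForm.toMatrix b B) := by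
    ext i j
    simp only [Matrix.transpose_apply, Matrix.neg_apply, BilinForm.toMatrix_apply]
    exact (LinearMap.IsAlt.neg halt _ _).symm
  have h2 : (BilinForm.toMatrix b B).det
      = (-1 : ℂ) ^ (Module.finrank ℂ V) * (BilinForm.toMatrix b B).det := by
    conv_lhs => rw [← Matrix.det_transpose (BilinForm.toMatrix b B), hskew, Matrix.det_neg]
    simp
  have h3 : ((-1 : ℂ) ^ (Module.finrank ℂ V) - 1) * (BilinForm.toMatrix b B).det = 0 := by
    rw [sub_mul, one_mul, ← h2, sub_self]
  have h4 : ((-1 : ℂ)) ^ (Module.finrank ℂ V) = 1 := by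
    rcases mul_eq_zero.mp h3 with h | h
    · linear_combination h
    · exact absurd h hdet
  exact (neg_one_pow_eq_one_iff_even (by norm_num)).mp h4

/-- Lemma 3.4 (dimension parity): for an sl₂-triple `(e,h,f)` in a
finite-dimensional complex Lie algebra `L` with nondegenerate Killing form, such
that `ad h` is diagonalizable with eigenvalues in `{-2,-1,0,1,2}` and the
eigenspace `L₂` is the line spanned by `e`, the eigenspace `L₁` of `ad h` for
the eigenvalue `1` is even-dimensional over `ℂ`. -/
theorem eigenspace_one_even_dimensional (L : Type*) [LieRing L] [LieAlgebra ℂ L]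
    [FiniteDimensional ℂ L]
    (hK : LinearMap.BilinForm.Nondegenerate (killingForm ℂ L))
    (e h f : L)
    (he : ⁅h, e⁆ = (2 : ℂ) • e) (hf : ⁅h, f⁆ = (-2 : ℂ) • f) (hef : ⁅e, f⁆ = h)
    (hspan :
      Module.End.eigenspace (LieAlgebra.ad ℂ L h) (-2)
        ⊔ Module.End.eigenspace (LieAlgebra.ad ℂ L h) (-1)
        ⊔ Module.End.eigenspace (LieAlgebra.ad ℂ L h) 0
        ⊔ Module.End.eigenspace (LieAlgebra.ad ℂ L h) 1
        ⊔ Module.End.eigenspace (LieAlgebra.ad ℂ L h) 2 = ⊤)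
    (hene : e ≠ 0)
    (hL2 : Module.End.eigenspace (LieAlgebra.ad ℂ L h) 2 = Submodule.span ℂ {e}) :
    Even (Module.finrank ℂ (Module.End.eigenspace (LieAlgebra.ad ℂ L h) 1)) := by
  set E := LieAlgebra.ad ℂ L h with hE
  have hmem : ∀ (μ : ℂ) (x : L), x ∈ Module.End.eigenspace E μ ↔ ⁅h, x⁆ = μ • x := by
    intro μ x
    rw [Module.End.mem_eigenspace_iff]
    simp [hE, LieAlgebra.ad_apply]
  -- orthogonality of eigenspaces under the Killing form
  have horth : ∀ (s t : ℂ), s + t ≠ 0 → ∀ a ∈ Module.End.eigenspace E s,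
      ∀ b ∈ Module.End.eigenspace E t, killingForm ℂ L a b = 0 := by
    intro s t hst a ha b hb
    rw [hmem] at ha hb
    have e2 : killingForm ℂ L ⁅h, a⁆ b = - killingForm ℂ L a ⁅h, b⁆ :=
      LieModule.traceForm_apply_lie_apply' ℂ L L h a b
    rw [ha, LinearMap.map_smul₂, smul_eq_mul, hb, map_smul, smul_eq_mul] at e2
    have key : (s + t) * killingForm ℂ L a b = 0 := by linear_combination e2
    rcases mul_eq_zero.mp key with hc | hc
    · exact absurd hc hst
    · exact hc
  -- the eigenspace for eigenvalue 3 is trivial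
  have h3bot : Module.End.eigenspace E 3 = ⊥ := by
    have hind := Module.End.eigenspaces_iSupIndep E
    have htop : (⊤ : Submodule ℂ L) ≤ ⨆ μ, ⨆ _ : μ ≠ (3 : ℂ), Module.End.eigenspace E μ := by
      rw [← hspan]
      refine sup_le (sup_le (sup_le (sup_le ?_ ?_) ?_) ?_) ?_ <;>
        exact le_iSup_of_le _ (le_iSup_of_le (by norm_num) le_rfl)
    have hsup : (⨆ μ, ⨆ _ : μ ≠ (3 : ℂ), Module.End.eigenspace E μ) = ⊤ :=
      le_antisymm le_top htop
    have hd := hind (3 : ℂ)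
    rw [hsup] at hd
    exact disjoint_top.mp hd
  -- membership facts
  have hfx : ∀ x ∈ Module.End.eigenspace E 1, ⁅f, x⁆ ∈ Module.End.eigenspace E (-1) := by
    intro x hx
    rw [hmem] at hx ⊢
    rw [leibniz_lie, hf, hx]
    simp only [neg_lie, smul_lie, lie_smul, one_smul]
    module
  have hex : ∀ x ∈ Module.End.eigenspace E 1, ⁅e, x⁆ = 0 := by
    intro x hx
    rw [hmem] at hx
    have : ⁅e, x⁆ ∈ Module.End.eigenspace E 3 := by
      rw [hmem, leibniz_lie, he, hx]
      simp only [smul_lie, lie_smul, one_smul]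
      module
    simpa [h3bot] using this
  set V := Module.End.eigenspace E 1 with hV
  let B : LinearMap.BilinForm ℂ V :=
    (killingForm ℂ L).compl₁₂ ((LieAlgebra.ad ℂ L f) ∘ₗ V.subtype) V.subtype
  have hBapp : ∀ x y : V, B x y = killingForm ℂ L ⁅f, (x : L)⁆ (y : L) := by
    intro x y
    simp [B, LieAlgebra.ad_apply]
  have halt : B.IsAlt := by
    intro x
    rw [hBapp]
    have := LieModule.traceForm_apply_lie_apply ℂ L L f (x : L) (x : L)
    simpa [lie_self] using this
  have hnd : B.Nondegenerate := by
    refine (LinearMap.IsRefl.nondegenerate_iff_separatingLeft (LinearMap.IsAlt.isRefl halt)).mpr ?_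
    intro x hx
    by_cases hfx0 : ⁅f, (x : L)⁆ = 0
    · -- then x is killed by e, f, hence by h = [e,f], but h acts as 1 on x
      have hx1 : ⁅h, (x : L)⁆ = (1 : ℂ) • (x : L) := (hmem 1 (x : L)).mp x.2
      have : (x : L) = 0 := by
        have hl : ⁅h, (x : L)⁆ = 0 := by
          rw [← hef, lie_lie, hfx0, hex (x : L) x.2]
          simp
        rw [hx1, one_smul] at hl
        exact hl
      exact Subtype.ext this
    · -- otherwise produce a partner in V pairing nontrivially
      exfalso
      obtain ⟨z, hz⟩ : ∃ z, killingForm ℂ L ⁅f, (x : L)⁆ z ≠ 0 := by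
        by_contra hcon
        push_neg at hcon
        exact hfx0 (hK.1 _ hcon)
      have hfm : ⁅f, (x : L)⁆ ∈ Module.End.eigenspace E (-1) := hfx _ x.2
      have hzmem : z ∈ Module.End.eigenspace E (-2) ⊔ Module.End.eigenspace E (-1)
          ⊔ Module.End.eigenspace E 0 ⊔ Module.End.eigenspace E 1
          ⊔ Module.End.eigenspace E 2 := hspan ▸ Submodule.mem_top
      obtain ⟨w1, hw1, z5, hz5, rfl⟩ := Submodule.mem_sup.mp hzmem
      obtain ⟨w2, hw2, z4, hz4, rfl⟩ := Submodule.mem_sup.mp hw1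
      obtain ⟨w3, hw3, z3, hz3, rfl⟩ := Submodule.mem_sup.mp hw2
      obtain ⟨z1, hz1, z2, hz2, rfl⟩ := Submodule.mem_sup.mp hw3
      have k1 : killingForm ℂ L ⁅f, (x : L)⁆ z1 = 0 := horth _ _ (by norm_num) _ hfm _ hz1
      have k2 : killingForm ℂ L ⁅f, (x : L)⁆ z2 = 0 := horth _ _ (by norm_num) _ hfm _ hz2
      have k3 : killingForm ℂ L ⁅f, (x : L)⁆ z3 = 0 := horth _ _ (by norm_num) _ hfm _ hz3
      have k5 : killingForm ℂ L ⁅f, (x : L)⁆ z5 = 0 := horth _ _ (by norm_num) _ hfm _ hz5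
      have k4 : killingForm ℂ L ⁅f, (x : L)⁆ z4 = 0 := by
        have := hx ⟨z4, hz4⟩
        rwa [hBapp] at this
      apply hz
      simp [map_add, k1, k2, k3, k4, k5]
  exact even_finrank_of_alt_nondeg B halt hnd
end

section
/- L decomposes as the internal direct sum L = Z_L(f) ⊕ F·h ⊕ L_2 ⊕ L_1 of the centralizer Z_L(f) = { x ∈ L : ⁅f,x⁆ = 0 }, the line spanned by h, and the eigenspaces L_2 and L_1 of ad h for the eigenvalues 2 and 1. (This is the decomposition g = g^{ē} ⊕ ℂh ⊕ g_2 ⊕ g_1 of Lemma 3.4.) -/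
private lemma key5 {F L : Type*} [Field F] [CharZero F] [AddCommGroup L] [Module F L]
    (T : Module.End F L) {a b c d g : L}
    (ha : a ∈ T.eigenspace (-2)) (hb : b ∈ T.eigenspace (-1))
    (hc : c ∈ T.eigenspace 0) (hd : d ∈ T.eigenspace 1) (hg : g ∈ T.eigenspace 2)
    (hsum : a + b + c + d + g = 0) :
    a = 0 ∧ b = 0 ∧ c = 0 ∧ d = 0 ∧ g = 0 := by
  have indep := T.eigenspaces_iSupIndep
  have mem : ∀ (μ ν : F) (x : L), ν ≠ μ → x ∈ T.eigenspace ν →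
      x ∈ ⨆ k, ⨆ _ : k ≠ μ, T.eigenspace k := fun μ ν x hne hx =>
    Submodule.mem_iSup_of_mem ν (Submodule.mem_iSup_of_mem hne hx)
  have peel : ∀ μ : F, ∀ x ∈ T.eigenspace μ,
      x ∈ (⨆ k, ⨆ _ : k ≠ μ, T.eigenspace k) → x = 0 := fun μ x hx hx' =>
    (Submodule.disjoint_def.mp (indep μ)) x hx hx'
  have hg0 : g = 0 := by
    refine peel 2 g hg ?_
    rw [← neg_eq_of_add_eq_zero_right hsum]
    exact neg_mem (add_mem (add_mem (add_mem (mem 2 (-2) a (by norm_num) ha)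
      (mem 2 (-1) b (by norm_num) hb)) (mem 2 0 c (by norm_num) hc))
      (mem 2 1 d (by norm_num) hd))
  have hsum4 : a + b + c + d = 0 := by simpa [hg0] using hsum
  have hd0 : d = 0 := by
    refine peel 1 d hd ?_
    rw [← neg_eq_of_add_eq_zero_right hsum4]
    exact neg_mem (add_mem (add_mem (mem 1 (-2) a (by norm_num) ha)
      (mem 1 (-1) b (by norm_num) hb)) (mem 1 0 c (by norm_num) hc))
  have hsum3 : a + b + c = 0 := by simpa [hd0] using hsum4
  have hc0 : c = 0 := by
    refine peel 0 c hc ?_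
    rw [← neg_eq_of_add_eq_zero_right hsum3]
    exact neg_mem (add_mem (mem 0 (-2) a (by norm_num) ha) (mem 0 (-1) b (by norm_num) hb))
  have hsum2 : a + b = 0 := by simpa [hc0] using hsum3
  have hb0 : b = 0 := by
    refine peel (-1) b hb ?_
    rw [← neg_eq_of_add_eq_zero_right hsum2]
    exact neg_mem (mem (-1) (-2) a (by norm_num) ha)
  have ha0 : a = 0 := by simpa [hb0] using hsum2
  exact ⟨ha0, hb0, hc0, hd0, hg0⟩


/-- Lemma 3.4 (the decomposition `g = g^{ē} ⊕ ℂh ⊕ g₂ ⊕ g₁`): for an sl₂-triple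
`(e,h,f)` in a finite-dimensional Lie algebra `L` over a field `F` of
characteristic zero such that `ad h` is diagonalizable with eigenvalues in
`{-2,-1,0,1,2}`, `L₂ = F·e` and `L₋₂ = F·f`, the module `L` is the internal
direct sum of the centralizer of `f`, the line `F·h`, and the eigenspaces `L₂`
and `L₁` of `ad h`. -/
theorem centralizer_decomposition (F : Type*) [Field F] [CharZero F]
    (L : Type*) [LieRing L] [LieAlgebra F L] [FiniteDimensional F L]
    (e h f : L)
    (he : ⁅h, e⁆ = (2 : F) • e) (hf : ⁅h, f⁆ = (-2 : F) • f) (hef : ⁅e, f⁆ = h)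
    (hspan :
      Module.End.eigenspace (LieAlgebra.ad F L h) (-2)
        ⊔ Module.End.eigenspace (LieAlgebra.ad F L h) (-1)
        ⊔ Module.End.eigenspace (LieAlgebra.ad F L h) 0
        ⊔ Module.End.eigenspace (LieAlgebra.ad F L h) 1
        ⊔ Module.End.eigenspace (LieAlgebra.ad F L h) 2 = ⊤)
    (hene : e ≠ 0) (hfne : f ≠ 0)
    (hL2 : Module.End.eigenspace (LieAlgebra.ad F L h) 2 = Submodule.span F {e})
    (hLm2 : Module.End.eigenspace (LieAlgebra.ad F L h) (-2) = Submodule.span F {f}) :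
    DirectSum.IsInternal
      ![LinearMap.ker (LieAlgebra.ad F L f),
        Submodule.span F {h},
        Module.End.eigenspace (LieAlgebra.ad F L h) 2,
        Module.End.eigenspace (LieAlgebra.ad F L h) 1] := by
  set T : Module.End F L := LieAlgebra.ad F L h with hT
  have memE : ∀ (s : F) (x : L), x ∈ T.eigenspace s ↔ ⁅h, x⁆ = s • x := by
    intro s x
    rw [Module.End.mem_eigenspace_iff, hT, LieAlgebra.ad_apply]
  -- bracket with f shifts eigenvalue by -2
  have hbf : ∀ (s : F) (x : L), x ∈ T.eigenspace s → ⁅f, x⁆ ∈ T.eigenspace (s - 2) := by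
    intro s x hx
    rw [memE] at hx ⊢
    rw [leibniz_lie h f x, hf, hx, smul_lie, lie_smul]
    module
  -- bracket with e shifts eigenvalue by +2
  have hbe : ∀ (s : F) (x : L), x ∈ T.eigenspace s → ⁅e, x⁆ ∈ T.eigenspace (s + 2) := by
    intro s x hx
    rw [memE] at hx ⊢
    rw [leibniz_lie h e x, he, hx, smul_lie, lie_smul]
    module
  -- eigenspaces outside {-2,...,2} vanish
  have hE : ∀ s : F, s ≠ -2 → s ≠ -1 → s ≠ 0 → s ≠ 1 → s ≠ 2 → T.eigenspace s = ⊥ := by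
    intro s h1 h2 h3 h4 h5
    have indep := T.eigenspaces_iSupIndep
    rw [eq_bot_iff]
    intro x hx
    have hle : T.eigenspace (-2) ⊔ T.eigenspace (-1) ⊔ T.eigenspace 0
        ⊔ T.eigenspace 1 ⊔ T.eigenspace 2 ≤ ⨆ k, ⨆ _ : k ≠ s, T.eigenspace k := by
      refine sup_le (sup_le (sup_le (sup_le ?_ ?_) ?_) ?_) ?_
      · exact le_iSup_of_le (-2) (le_iSup_of_le (Ne.symm h1) le_rfl)
      · exact le_iSup_of_le (-1) (le_iSup_of_le (Ne.symm h2) le_rfl)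
      · exact le_iSup_of_le 0 (le_iSup_of_le (Ne.symm h3) le_rfl)
      · exact le_iSup_of_le 1 (le_iSup_of_le (Ne.symm h4) le_rfl)
      · exact le_iSup_of_le 2 (le_iSup_of_le (Ne.symm h5) le_rfl)
    have hx2 : x ∈ ⨆ k, ⨆ _ : k ≠ s, T.eigenspace k := by
      apply hle
      rw [hspan]
      trivial
    simpa using Submodule.disjoint_def.mp (indep s) x hx hx2
  have hhne : h ≠ 0 := by
    intro hh
    apply hene
    have : (0 : L) = (2 : F) • e := by rw [← he, hh, zero_lie]
    have h2 := this.symm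
    rcases smul_eq_zero.mp h2 with h' | h'
    · norm_num at h'
    · exact h'
  have hfe : ⁅f, e⁆ = -h := by rw [← lie_skew, hef]
  have hfh : ⁅f, h⁆ = (2 : F) • f := by
    rw [← lie_skew, hf]; module
  -- kernel facts on eigenspaces 1 and 2
  have hE1ker : ∀ x : L, x ∈ T.eigenspace 1 → ⁅f, x⁆ = 0 → x = 0 := by
    intro x hx hfx
    have h3 : ⁅e, x⁆ = 0 := by
      have hmem := hbe 1 x hx
      rw [show (1 : F) + 2 = 3 by norm_num,
        hE 3 (by norm_num) (by norm_num) (by norm_num) (by norm_num) (by norm_num)] at hmem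
      simpa using hmem
    have hx1 : ⁅h, x⁆ = x := by
      have := (memE 1 x).mp hx; rwa [one_smul] at this
    have hcalc : (0 : L) = -x := by
      calc (0 : L) = ⁅f, ⁅e, x⁆⁆ := by rw [h3, lie_zero]
        _ = ⁅⁅f, e⁆, x⁆ + ⁅e, ⁅f, x⁆⁆ := (leibniz_lie f e x)
        _ = -x := by rw [hfx, lie_zero, add_zero, hfe, neg_lie, hx1]
    simpa using hcalc.symm
  have hE2ker : ∀ x : L, x ∈ T.eigenspace 2 → ⁅f, x⁆ = 0 → x = 0 := by
    intro x hx hfx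
    rw [hL2] at hx
    obtain ⟨c, rfl⟩ := Submodule.mem_span_singleton.mp hx
    rw [lie_smul, hfe, smul_neg, neg_eq_zero] at hfx
    rcases smul_eq_zero.mp hfx with h' | h'
    · rw [h', zero_smul]
    · exact absurd h' hhne
  have hE0h : h ∈ T.eigenspace 0 := by
    rw [memE, lie_self, zero_smul]
  -- decomposition of the zero eigenspace
  have hK : ∀ x : L, x ∈ T.eigenspace 0 →
      ∃ (y : L) (c : F), y ∈ T.eigenspace 0 ∧ ⁅f, y⁆ = 0 ∧ x = y + c • h := by
    intro x hx
    have h2 := hbf 0 x hx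
    rw [show (0 : F) - 2 = -2 by norm_num, hLm2] at h2
    obtain ⟨c, hc⟩ := Submodule.mem_span_singleton.mp h2
    refine ⟨x - (c / 2) • h, c / 2, ?_, ?_, by abel⟩
    · exact Submodule.sub_mem _ hx (Submodule.smul_mem _ _ hE0h)
    · rw [lie_sub, lie_smul, hfh, ← hc, smul_smul]
      have : c / 2 * 2 = c := by field_simp
      rw [this, sub_self]
  -- structure of the centralizer of f
  have hker : ∀ a : L, ⁅f, a⁆ = 0 → ∃ p q r, p ∈ T.eigenspace (-2) ∧ q ∈ T.eigenspace (-1) ∧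
      r ∈ T.eigenspace 0 ∧ ⁅f, r⁆ = 0 ∧ a = p + q + r := by
    intro a hfa
    have hat : a ∈ (⊤ : Submodule F L) := trivial
    rw [← hspan] at hat
    obtain ⟨y4, hy4, g1, hg1, h4⟩ := Submodule.mem_sup.mp hat
    obtain ⟨y3, hy3, d1, hd1, h3⟩ := Submodule.mem_sup.mp hy4
    obtain ⟨y2, hy2, r, hr, h2⟩ := Submodule.mem_sup.mp hy3
    obtain ⟨p, hp, q, hq, h1⟩ := Submodule.mem_sup.mp hy2
    have haeq : p + q + r + d1 + g1 = a := by rw [← h4, ← h3, ← h2, ← h1]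
    have hfp : ⁅f, p⁆ = 0 := by
      have := hbf (-2) p hp
      rw [show (-2 : F) - 2 = -4 by norm_num,
        hE (-4) (by norm_num) (by norm_num) (by norm_num) (by norm_num) (by norm_num)] at this
      simpa using this
    have hfq : ⁅f, q⁆ = 0 := by
      have := hbf (-1) q hq
      rw [show (-1 : F) - 2 = -3 by norm_num,
        hE (-3) (by norm_num) (by norm_num) (by norm_num) (by norm_num) (by norm_num)] at this
      simpa using this
    have hsum : ⁅f, r⁆ + ⁅f, d1⁆ + ⁅f, g1⁆ + 0 + 0 = 0 := by
      have h0 : ⁅f, p + q + r + d1 + g1⁆ = 0 := by rw [haeq, hfa]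
      simp only [lie_add, hfp, hfq] at h0
      rw [add_zero, add_zero, ← h0]
      abel
    have hmr : ⁅f, r⁆ ∈ T.eigenspace (-2) := by
      have := hbf 0 r hr; rwa [show (0 : F) - 2 = -2 by norm_num] at this
    have hmd : ⁅f, d1⁆ ∈ T.eigenspace (-1) := by
      have := hbf 1 d1 hd1; rwa [show (1 : F) - 2 = -1 by norm_num] at this
    have hmg : ⁅f, g1⁆ ∈ T.eigenspace 0 := by
      have := hbf 2 g1 hg1; rwa [show (2 : F) - 2 = 0 by norm_num] at this
    obtain ⟨e1, e2, e3, -, -⟩ :=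
      key5 T hmr hmd hmg (Submodule.zero_mem _) (Submodule.zero_mem _) hsum
    have hg10 : g1 = 0 := hE2ker g1 hg1 e3
    have hd10 : d1 = 0 := hE1ker d1 hd1 e2
    exact ⟨p, q, r, hp, hq, hr, e1, by rw [← haeq, hg10, hd10, add_zero, add_zero]⟩
  -- now the main statement
  rw [DirectSum.isInternal_submodule_iff_iSupIndep_and_iSup_eq_top]
  set V : Fin 4 → Submodule F L :=
    ![LinearMap.ker (LieAlgebra.ad F L f),
      Submodule.span F {h},
      T.eigenspace 2,
      T.eigenspace 1] with hV
  have hV0 : V 0 = LinearMap.ker (LieAlgebra.ad F L f) := rfl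
  have hV1 : V 1 = Submodule.span F {h} := rfl
  have hV2 : V 2 = T.eigenspace 2 := rfl
  have hV3 : V 3 = T.eigenspace 1 := rfl
  have hmemker : ∀ x : L, x ∈ V 0 ↔ ⁅f, x⁆ = 0 := by
    intro x
    rw [hV0, LinearMap.mem_ker, LieAlgebra.ad_apply]
  constructor
  · -- independence
    rw [iSupIndep_def]
    intro i
    have hbsup : ∀ (i : Fin 4) (A : Submodule F L), (∀ j : Fin 4, j ≠ i → V j ≤ A) →
        (⨆ j, ⨆ _ : j ≠ i, V j) ≤ A := fun i A hA =>
      iSup_le fun j => iSup_le fun hj => hA j hj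
    fin_cases i
    · -- i = 0 : the centralizer of f
      rw [Submodule.disjoint_def]
      intro x hx hx'
      have hx'' : x ∈ V 1 ⊔ V 2 ⊔ V 3 := by
        refine hbsup 0 _ ?_ hx'
        intro j hj
        fin_cases j
        · exact absurd rfl hj
        · exact le_sup_of_le_left le_sup_left
        · exact le_sup_of_le_left le_sup_right
        · exact le_sup_right
      obtain ⟨y, hy, d, hd, hyd⟩ := Submodule.mem_sup.mp hx''
      obtain ⟨b, hb, c, hc, hbc⟩ := Submodule.mem_sup.mp hy
      rw [hV1] at hb
      rw [hV2] at hc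
      rw [hV3] at hd
      obtain ⟨β, hβ⟩ := Submodule.mem_span_singleton.mp hb
      have hxeq : b + c + d = x := by rw [← hyd, ← hbc]
      have hfx : ⁅f, x⁆ = 0 := (hmemker x).mp hx
      have hb0 : b ∈ T.eigenspace 0 := by
        rw [← hβ]; exact Submodule.smul_mem _ _ hE0h
      have hmb : ⁅f, b⁆ ∈ T.eigenspace (-2) := by
        have := hbf 0 b hb0; rwa [show (0 : F) - 2 = -2 by norm_num] at this
      have hmd' : ⁅f, d⁆ ∈ T.eigenspace (-1) := by
        have := hbf 1 d hd; rwa [show (1 : F) - 2 = -1 by norm_num] at this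
      have hmc : ⁅f, c⁆ ∈ T.eigenspace 0 := by
        have := hbf 2 c hc; rwa [show (2 : F) - 2 = 0 by norm_num] at this
      have hsum : ⁅f, b⁆ + ⁅f, d⁆ + ⁅f, c⁆ + 0 + 0 = 0 := by
        have h0 : ⁅f, b + c + d⁆ = 0 := by rw [hxeq, hfx]
        simp only [lie_add] at h0
        rw [add_zero, add_zero, ← h0]
        abel
      obtain ⟨k1, k2, k3, -, -⟩ :=
        key5 T hmb hmd' hmc (Submodule.zero_mem _) (Submodule.zero_mem _) hsum
      have hc0 : c = 0 := hE2ker c hc k3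
      have hd0 : d = 0 := hE1ker d hd k2
      have hβ0 : β = 0 := by
        have hz : β • ⁅f, h⁆ = 0 := by rw [← lie_smul, hβ, k1]
        rw [hfh, smul_smul] at hz
        rcases smul_eq_zero.mp hz with h' | h'
        · rcases mul_eq_zero.mp h' with h'' | h''
          · exact h''
          · norm_num at h''
        · exact absurd h' hfne
      rw [← hxeq, hc0, hd0, ← hβ, hβ0, zero_smul, add_zero, add_zero]
    · -- i = 1 : the line spanned by h
      rw [Submodule.disjoint_def]
      intro x hx hx'
      have hxs : x ∈ Submodule.span F {h} := hx
      obtain ⟨β, hβ⟩ := Submodule.mem_span_singleton.mp hxs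
      have hx'' : x ∈ V 0 ⊔ V 2 ⊔ V 3 := by
        refine hbsup 1 _ ?_ hx'
        intro j hj
        fin_cases j
        · exact le_sup_of_le_left le_sup_left
        · exact absurd rfl hj
        · exact le_sup_of_le_left le_sup_right
        · exact le_sup_right
      obtain ⟨y, hy, d, hd, hyd⟩ := Submodule.mem_sup.mp hx''
      obtain ⟨a, ha, c, hc, hac⟩ := Submodule.mem_sup.mp hy
      rw [hV2] at hc
      rw [hV3] at hd
      have hfa : ⁅f, a⁆ = 0 := (hmemker a).mp ha
      obtain ⟨p, q, r, hp, hq, hr, hfr, hadef⟩ := hker a hfa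
      have hxeq : a + c + d = x := by rw [← hyd, ← hac]
      have e2 : p + q + r + c + d = β • h := by rw [← hadef, hxeq, hβ]
      have hsum : p + q + (r - β • h) + d + c = 0 := by
        rw [← e2]; abel
      have hm0 : r - β • h ∈ T.eigenspace 0 :=
        Submodule.sub_mem _ hr (Submodule.smul_mem _ _ hE0h)
      obtain ⟨-, -, k3, -, -⟩ := key5 T hp hq hm0 hd hc hsum
      have hrh : β • h = r := (sub_eq_zero.mp k3).symm
      have hβ0 : β = 0 := by
        have hz : β • ((2 : F) • f) = 0 := by
          rw [← hfh, ← lie_smul, hrh, hfr]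
        rw [smul_smul] at hz
        rcases smul_eq_zero.mp hz with h' | h'
        · rcases mul_eq_zero.mp h' with h'' | h''
          · exact h''
          · norm_num at h''
        · exact absurd h' hfne
      rw [← hβ, hβ0, zero_smul]
    · -- i = 2 : the eigenspace for 2
      rw [Submodule.disjoint_def]
      intro x hx hx'
      replace hx : x ∈ T.eigenspace 2 := hx
      have hx'' : x ∈ V 0 ⊔ V 1 ⊔ V 3 := by
        refine hbsup 2 _ ?_ hx'
        intro j hj
        fin_cases j
        · exact le_sup_of_le_left le_sup_left
        · exact le_sup_of_le_left le_sup_right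
        · exact absurd rfl hj
        · exact le_sup_right
      obtain ⟨y, hy, d, hd, hyd⟩ := Submodule.mem_sup.mp hx''
      obtain ⟨a, ha, b, hb, hab⟩ := Submodule.mem_sup.mp hy
      rw [hV1] at hb
      rw [hV3] at hd
      obtain ⟨β, hβ⟩ := Submodule.mem_span_singleton.mp hb
      have hfa : ⁅f, a⁆ = 0 := (hmemker a).mp ha
      obtain ⟨p, q, r, hp, hq, hr, hfr, hadef⟩ := hker a hfa
      have hxeq : a + b + d = x := by rw [← hyd, ← hab]
      have e2 : p + q + r + β • h + d = x := by rw [← hadef, hβ]; exact hxeq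
      have hsum : p + q + (r + β • h) + d + (-x) = 0 := by
        rw [← e2]; abel
      have hm0 : r + β • h ∈ T.eigenspace 0 :=
        Submodule.add_mem _ hr (Submodule.smul_mem _ _ hE0h)
      obtain ⟨-, -, -, -, k5⟩ := key5 T hp hq hm0 hd (Submodule.neg_mem _ hx) hsum
      exact neg_eq_zero.mp k5
    · -- i = 3 : the eigenspace for 1
      rw [Submodule.disjoint_def]
      intro x hx hx'
      replace hx : x ∈ T.eigenspace 1 := hx
      have hx'' : x ∈ V 0 ⊔ V 1 ⊔ V 2 := by
        refine hbsup 3 _ ?_ hx'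
        intro j hj
        fin_cases j
        · exact le_sup_of_le_left le_sup_left
        · exact le_sup_of_le_left le_sup_right
        · exact le_sup_right
        · exact absurd rfl hj
      obtain ⟨y, hy, c, hc, hyc⟩ := Submodule.mem_sup.mp hx''
      obtain ⟨a, ha, b, hb, hab⟩ := Submodule.mem_sup.mp hy
      rw [hV1] at hb
      rw [hV2] at hc
      obtain ⟨β, hβ⟩ := Submodule.mem_span_singleton.mp hb
      have hfa : ⁅f, a⁆ = 0 := (hmemker a).mp ha
      obtain ⟨p, q, r, hp, hq, hr, hfr, hadef⟩ := hker a hfa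
      have hxeq : a + b + c = x := by rw [← hyc, ← hab]
      have e2 : p + q + r + β • h + c = x := by rw [← hadef, hβ]; exact hxeq
      have hsum : p + q + (r + β • h) + (-x) + c = 0 := by
        rw [← e2]; abel
      have hm0 : r + β • h ∈ T.eigenspace 0 :=
        Submodule.add_mem _ hr (Submodule.smul_mem _ _ hE0h)
      obtain ⟨-, -, -, k4, -⟩ := key5 T hp hq hm0 (Submodule.neg_mem _ hx) hc hsum
      exact neg_eq_zero.mp k4
  · -- supremum is everything
    rw [eq_top_iff, ← hspan]
    refine sup_le (sup_le (sup_le (sup_le ?_ ?_) ?_) ?_) ?_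
    · -- eigenspace -2 ≤ ker
      refine le_trans ?_ (le_iSup V 0)
      rw [hLm2, hV0]
      rw [Submodule.span_le, Set.singleton_subset_iff]
      rw [SetLike.mem_coe, LinearMap.mem_ker, LieAlgebra.ad_apply, lie_self]
    · -- eigenspace -1 ≤ ker
      refine le_trans ?_ (le_iSup V 0)
      intro x hx
      rw [hmemker]
      have := hbf (-1) x hx
      rw [show (-1 : F) - 2 = -3 by norm_num,
        hE (-3) (by norm_num) (by norm_num) (by norm_num) (by norm_num) (by norm_num)] at this
      simpa using this
    · -- eigenspace 0 ≤ ker ⊔ span h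
      intro x hx
      obtain ⟨y, c, hy0, hyf, hxeq⟩ := hK x hx
      rw [hxeq]
      refine Submodule.add_mem _ ?_ ?_
      · exact Submodule.mem_iSup_of_mem 0 ((hmemker y).mpr hyf)
      · exact Submodule.mem_iSup_of_mem 1
          (Submodule.smul_mem _ c (Submodule.mem_span_singleton_self h))
    · exact le_trans (le_of_eq hV3.symm) (le_iSup V 3)
    · exact le_trans (le_of_eq hV2.symm) (le_iSup V 2)
end
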